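/- arXiv:2412.03264 — 2 statements merged into one kernel-verified Lean document; each statement's English description precedes it below -/
import Mathlib

section
/- Let M be an E-unitary inverse monoid and N an inverse submonoid of M contained in the group of units U_M. Then N is upwardly directed into M: for all s ∈ M and u ∈ N, if s ∧ u exists then there is v ∈ N ∪ {1} with s ≤ v and u ≤ v. -/
/-- An inverse monoid: a monoid with an involution `⁻¹` such that `x * x⁻¹ * x = x`,
`x⁻¹ * x * x⁻¹ = x⁻¹` and all idempotents commute (these conditions are equivalent to
uniqueness of generalized inverses). -/
class InverseMonoid (M : Type*) extends Monoid M, Inv M where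
  mul_inv_mul : ∀ x : M, x * x⁻¹ * x = x
  inv_mul_inv : ∀ x : M, x⁻¹ * x * x⁻¹ = x⁻¹
  idem_comm : ∀ e f : M, e * e = e → f * f = f → e * f = f * e

namespace InverseMonoid

variable {M : Type*} [InverseMonoid M]

/-- An idempotent element. -/
def IsIdem (e : M) : Prop := e * e = e

/-- The natural partial order on an inverse monoid: `x ≤ y` iff `x = y * e` for some
idempotent `e`. -/
def le (x y : M) : Prop := ∃ e : M, IsIdem e ∧ x = y * e

/-- The compatibility relation: `m ∼ n` iff `m * n⁻¹` and `m⁻¹ * n` are idempotent. -/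
def Compatible (m n : M) : Prop := IsIdem (m * n⁻¹) ∧ IsIdem (m⁻¹ * n)

/-- `z` is the meet (greatest lower bound) of `m` and `n` in the natural partial order. -/
def IsMeet (m n z : M) : Prop :=
  le z m ∧ le z n ∧ ∀ w : M, le w m → le w n → le w z

/-- An inverse monoid is E-unitary iff its compatibility relation is transitive. -/
def EUnitary (M : Type*) [InverseMonoid M] : Prop :=
  ∀ a b c : M, Compatible a b → Compatible b c → Compatible a c


lemma isIdem_mul_inv (x : M) : IsIdem (x * x⁻¹) := by
  show x * x⁻¹ * (x * x⁻¹) = x * x⁻¹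
  calc x * x⁻¹ * (x * x⁻¹) = (x * x⁻¹ * x) * x⁻¹ := by simp [mul_assoc]
    _ = x * x⁻¹ := by rw [mul_inv_mul]

lemma isIdem_inv_mul (x : M) : IsIdem (x⁻¹ * x) := by
  show x⁻¹ * x * (x⁻¹ * x) = x⁻¹ * x
  calc x⁻¹ * x * (x⁻¹ * x) = (x⁻¹ * x * x⁻¹) * x := by simp [mul_assoc]
    _ = x⁻¹ * x := by rw [inv_mul_inv]

lemma isIdem_mul {e f : M} (he : IsIdem e) (hf : IsIdem f) : IsIdem (e * f) := by
  show e * f * (e * f) = e * f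
  calc e * f * (e * f) = e * (f * e) * f := by simp [mul_assoc]
    _ = e * (e * f) * f := by rw [idem_comm f e hf he]
    _ = (e * e) * (f * f) := by simp [mul_assoc]
    _ = e * f := by rw [he, hf]

lemma isIdem_conj (x : M) {e : M} (he : IsIdem e) : IsIdem (x * e * x⁻¹) := by
  have h1 : IsIdem (x⁻¹ * x) := isIdem_inv_mul x
  show x * e * x⁻¹ * (x * e * x⁻¹) = x * e * x⁻¹
  calc x * e * x⁻¹ * (x * e * x⁻¹) = x * (e * (x⁻¹ * x)) * (e * x⁻¹) := by
        simp [mul_assoc]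
    _ = x * ((x⁻¹ * x) * e) * (e * x⁻¹) := by rw [idem_comm e (x⁻¹ * x) he h1]
    _ = (x * x⁻¹ * x) * ((e * e) * x⁻¹) := by simp [mul_assoc]
    _ = x * (e * x⁻¹) := by rw [mul_inv_mul, he]
    _ = x * e * x⁻¹ := by rw [mul_assoc]

lemma inv_unique {x y : M} (h1 : x * y * x = x) (h2 : y * x * y = y) : y = x⁻¹ := by
  have hyx : IsIdem (y * x) := by
    show y * x * (y * x) = y * x
    calc y * x * (y * x) = (y * x * y) * x := by simp [mul_assoc]
      _ = y * x := by rw [h2]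
  have hxy : IsIdem (x * y) := by
    show x * y * (x * y) = x * y
    calc x * y * (x * y) = (x * y * x) * y := by simp [mul_assoc]
      _ = x * y := by rw [h1]
  have key1 : y = x⁻¹ * x * y := by
    calc y = y * x * y := h2.symm
      _ = y * (x * x⁻¹ * x) * y := by rw [mul_inv_mul]
      _ = ((y * x) * (x⁻¹ * x)) * y := by simp [mul_assoc]
      _ = ((x⁻¹ * x) * (y * x)) * y := by rw [idem_comm (y*x) (x⁻¹*x) hyx (isIdem_inv_mul x)]
      _ = x⁻¹ * x * (y * x * y) := by simp [mul_assoc]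
      _ = x⁻¹ * x * y := by rw [h2]
  have key2 : y = y * (x * x⁻¹) := by
    calc y = y * x * y := h2.symm
      _ = y * (x * x⁻¹ * x) * y := by rw [mul_inv_mul]
      _ = y * ((x * x⁻¹) * (x * y)) := by simp [mul_assoc]
      _ = y * ((x * y) * (x * x⁻¹)) := by rw [idem_comm (x*x⁻¹) (x*y) (isIdem_mul_inv x) hxy]
      _ = (y * x * y) * (x * x⁻¹) := by simp [mul_assoc]
      _ = y * (x * x⁻¹) := by rw [h2]
  calc y = x⁻¹ * x * y := key1
    _ = x⁻¹ * x * (y * (x * x⁻¹)) := by rw [← key2]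
    _ = x⁻¹ * (x * y * x) * x⁻¹ := by simp [mul_assoc]
    _ = x⁻¹ * x * x⁻¹ := by rw [h1]
    _ = x⁻¹ := inv_mul_inv x

lemma idem_inv {e : M} (he : IsIdem e) : e⁻¹ = e := by
  have h : e * e * e = e := by rw [he, he]
  exact (inv_unique h h).symm

lemma mul_inv_rev' (a b : M) : (a * b)⁻¹ = b⁻¹ * a⁻¹ := by
  have hc : (b * b⁻¹) * (a⁻¹ * a) = (a⁻¹ * a) * (b * b⁻¹) :=
    idem_comm _ _ (isIdem_mul_inv b) (isIdem_inv_mul a)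
  have h1 : (a * b) * (b⁻¹ * a⁻¹) * (a * b) = a * b := by
    calc (a * b) * (b⁻¹ * a⁻¹) * (a * b)
        = a * ((b * b⁻¹) * (a⁻¹ * a)) * b := by simp [mul_assoc]
      _ = a * ((a⁻¹ * a) * (b * b⁻¹)) * b := by rw [hc]
      _ = (a * a⁻¹ * a) * (b * b⁻¹ * b) := by simp [mul_assoc]
      _ = a * b := by rw [mul_inv_mul, mul_inv_mul]
  have h2 : (b⁻¹ * a⁻¹) * (a * b) * (b⁻¹ * a⁻¹) = b⁻¹ * a⁻¹ := by
    calc (b⁻¹ * a⁻¹) * (a * b) * (b⁻¹ * a⁻¹)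
        = b⁻¹ * ((a⁻¹ * a) * (b * b⁻¹)) * a⁻¹ := by simp [mul_assoc]
      _ = b⁻¹ * ((b * b⁻¹) * (a⁻¹ * a)) * a⁻¹ := by rw [hc]
      _ = (b⁻¹ * b * b⁻¹) * (a⁻¹ * a * a⁻¹) := by simp [mul_assoc]
      _ = b⁻¹ * a⁻¹ := by rw [inv_mul_inv, inv_mul_inv]
  exact (inv_unique h1 h2).symm

lemma compat_of_le_left {x z : M} (h : le z x) : Compatible x z := by
  obtain ⟨e, he, rfl⟩ := h
  constructor
  · have : x * (x * e)⁻¹ = x * e * x⁻¹ := by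
      rw [mul_inv_rev', idem_inv he]; simp [mul_assoc]
    rw [this]; exact isIdem_conj x he
  · have : x⁻¹ * (x * e) = (x⁻¹ * x) * e := by simp [mul_assoc]
    rw [this]; exact isIdem_mul (isIdem_inv_mul x) he

lemma compat_of_le_right {u z : M} (h : le z u) : Compatible z u := by
  obtain ⟨e, he, rfl⟩ := h
  constructor
  · have : (u * e) * u⁻¹ = u * e * u⁻¹ := rfl
    exact isIdem_conj u he
  · have : (u * e)⁻¹ * u = e * (u⁻¹ * u) := by
      rw [mul_inv_rev', idem_inv he]; simp [mul_assoc]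
    rw [this]; exact isIdem_mul he (isIdem_inv_mul u)


end InverseMonoid

open InverseMonoid

/-- An inverse submonoid contained in the group of units of an E-unitary
inverse monoid is upwardly directed. -/
theorem stmt4 {M : Type*} [InverseMonoid M] (hM : EUnitary M)
    (N : Submonoid M) (hNinv : ∀ n ∈ N, n⁻¹ ∈ N)
    (hNunit : ∀ n ∈ N, n * n⁻¹ = 1 ∧ n⁻¹ * n = 1) :
    ∀ s : M, ∀ u ∈ N, (∃ z : M, IsMeet s u z) →
      ∃ v : M, (v ∈ N ∨ v = 1) ∧ le s v ∧ le u v := by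
  intro s u hu hmeet
  obtain ⟨z, hzs, hzu, -⟩ := hmeet
  have h3 : Compatible s u := hM s z u (compat_of_le_left hzs) (compat_of_le_right hzu)
  obtain ⟨hu1, hu2⟩ := hNunit u hu
  have hf : IsIdem (s * u⁻¹) := h3.1
  refine ⟨u, Or.inl hu, ⟨u⁻¹ * (s * u⁻¹) * u, ?_, ?_⟩, ⟨1, ?_, (mul_one u).symm⟩⟩
  · show u⁻¹ * (s * u⁻¹) * u * (u⁻¹ * (s * u⁻¹) * u) = u⁻¹ * (s * u⁻¹) * u
    calc u⁻¹ * (s * u⁻¹) * u * (u⁻¹ * (s * u⁻¹) * u)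
        = u⁻¹ * ((s * u⁻¹) * ((u * u⁻¹) * ((s * u⁻¹) * u))) := by simp [mul_assoc]
      _ = u⁻¹ * ((s * u⁻¹) * (s * u⁻¹) * u) := by rw [hu1]; simp [mul_assoc]
      _ = u⁻¹ * (s * u⁻¹) * u := by rw [hf]; simp [mul_assoc]
  · calc s = s * (u⁻¹ * u) := by rw [hu2, mul_one]
      _ = (u * u⁻¹) * ((s * u⁻¹) * u) := by rw [hu1]; simp [mul_assoc]
      _ = u * (u⁻¹ * (s * u⁻¹) * u) := by simp [mul_assoc]
  · show (1 : M) * 1 = 1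
    rw [mul_one]
end

section
/- Let M = Inv⟨X | r_i(u_1,…,u_k) = 1 (i ∈ I)⟩ be a special inverse monoid where each relator is a concatenation of the words u_j and their formal inverses, and suppose each u_j represents a unit of M (a unital factorisation). Then every prefix of every u_j^{±1} that occurs in some relator represents a right unit of M, and hence the factorisation is conservative in the maximal group image G: the submonoid of G generated by prefixes of the factors equals the prefix monoid of G. -/
open InverseMonoid

/-- Evaluation of a word over `X ∪ X⁻¹` in a monoid with involution. -/
def wordProd {X M : Type*} [Monoid M] [Inv M] (f : X → M) (w : List (X × Bool)) : M :=
  (w.map fun p => if p.2 then f p.1 else (f p.1)⁻¹).prod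

/-- The formal inverse of a word over `X ∪ X⁻¹`. -/
def winv {X : Type*} (w : List (X × Bool)) : List (X × Bool) :=
  (w.map fun p => (p.1, !p.2)).reverse

/-- The set of relators in the free group determined by a family of relator words. -/
def presRels {X I : Type*} (rel : I → List (X × Bool)) : Set (FreeGroup X) :=
  Set.range fun i => FreeGroup.mk (rel i)

/-- The canonical projection from the free group onto a presented group. -/
def toPres {X : Type*} (R : Set (FreeGroup X)) : FreeGroup X →* PresentedGroup R :=
  QuotientGroup.mk' (Subgroup.normalClosure R)

/-- The prefix monoid of a group presentation: the submonoid of the presented group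
generated by the images of all prefixes of the relator words. -/
def prefixMonoid {X I : Type*} (rel : I → List (X × Bool)) :
    Submonoid (PresentedGroup (presRels rel)) :=
  Submonoid.closure
    {g | ∃ (i : I) (p : List (X × Bool)), p <+: rel i ∧ g = toPres (presRels rel) (FreeGroup.mk p)}

/-- `f : X → M` is a presentation of the inverse monoid `M` by the special presentation
`Inv⟨X | rel i = 1 (i ∈ I)⟩`: the relators hold, the generators generate, and `M` is
universal among inverse monoids satisfying the relations. -/
structure IsSpecialPresentation {X I : Type*} (rel : I → List (X × Bool))
    {M : Type*} [InverseMonoid M] (f : X → M) : Prop where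
  relator_one : ∀ i, wordProd f (rel i) = 1
  generates : ∀ m : M, ∃ w : List (X × Bool), wordProd f w = m
  universal : ∀ (N : Type) (_ : InverseMonoid N) (g : X → N),
    (∀ i, wordProd g (rel i) = 1) → ∃ φ : M →* N, ∀ x, φ (f x) = g x

/-- The signed factor word `u_j^ε`. -/
def sfac {X : Type*} {k : ℕ} (u : Fin k → List (X × Bool)) (q : Fin k × Bool) :
    List (X × Bool) :=
  if q.2 then u q.1 else winv (u q.1)

/-!
A prefix `p` of an occurring factor sits in a relator `r = a p s b` with `a` a product of units;
from `a (p s b) = 1` we get `p (s b a) = 1`, so `p` is a right unit.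

For conservativity, the prefix monoid `P` of `G` acts on itself by partial right translations
`x ↦ x g` (defined when `x g ∈ P`). Every prefix of a relator keeps `P` inside `P`, so each
relator acts as the identity and the universal property of `M` gives a representation of `M` by
partial bijections of `P`. A right unit `m` acts with full domain; applied to `1 ∈ P` this shows
that the image of `m` in `G` lies in `P`. Conversely, a prefix of a relator is a product of whole
factors followed by a prefix of one factor. Since `M` is only universal among inverse monoids in
`Type`, `P` is replaced by a `Shrink` of it, which exists because the relators use only the
finitely many letters of the `u_j`.
-/

namespace InverseMonoid

variable {M : Type*} [InverseMonoid M]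

theorem inverse_unique {x y z : M} (hy₁ : x * y * x = x) (hy₂ : y * x * y = y)
    (hz₁ : x * z * x = x) (hz₂ : z * x * z = z) : y = z := by
  have idem_yx : y * x * (y * x) = y * x := by rw [← mul_assoc, hy₂]
  have idem_zx : z * x * (z * x) = z * x := by rw [← mul_assoc, hz₂]
  have idem_xy : x * y * (x * y) = x * y := by rw [← mul_assoc, hy₁]
  have idem_xz : x * z * (x * z) = x * z := by rw [← mul_assoc, hz₁]
  have hyxz : y * x * z = y :=
    calc y * x * z = y * x * y * x * z := by rw [hy₂]
      _ = y * (x * y * (x * z)) := by simp only [mul_assoc]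
      _ = y * (x * z * (x * y)) := by rw [idem_comm _ _ idem_xy idem_xz]
      _ = y * (x * z * x) * y := by simp only [mul_assoc]
      _ = y := by rw [hz₁, hy₂]
  calc y = y * x * z := hyxz.symm
    _ = y * x * (z * x * z) := by rw [hz₂]
    _ = y * x * (z * x) * z := by simp only [mul_assoc]
    _ = z * x * (y * x) * z := by rw [idem_comm _ _ idem_yx idem_zx]
    _ = z * (x * y * x) * z := by simp only [mul_assoc]
    _ = z := by rw [hy₁, hz₂]

theorem inv_eq_of_mul_mul {x y : M} (h₁ : x * y * x = x) (h₂ : y * x * y = y) : x⁻¹ = y :=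
  inverse_unique (mul_inv_mul x) (inv_mul_inv x) h₁ h₂

protected theorem inv_inv (x : M) : x⁻¹⁻¹ = x :=
  inv_eq_of_mul_mul (inv_mul_inv x) (mul_inv_mul x)

protected theorem inv_one : (1 : M)⁻¹ = 1 :=
  inv_eq_of_mul_mul (by simp) (by simp)

protected theorem mul_inv_rev (x y : M) : (x * y)⁻¹ = y⁻¹ * x⁻¹ := by
  have idem_y : y * y⁻¹ * (y * y⁻¹) = y * y⁻¹ := by rw [← mul_assoc, mul_inv_mul]
  have idem_x : x⁻¹ * x * (x⁻¹ * x) = x⁻¹ * x := by rw [← mul_assoc, inv_mul_inv]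
  refine inv_eq_of_mul_mul ?_ ?_
  · calc x * y * (y⁻¹ * x⁻¹) * (x * y) = x * (y * y⁻¹ * (x⁻¹ * x)) * y := by
          simp only [mul_assoc]
      _ = x * x⁻¹ * x * (y * y⁻¹ * y) := by
          rw [idem_comm _ _ idem_y idem_x]; simp only [mul_assoc]
      _ = x * y := by rw [mul_inv_mul, mul_inv_mul]
  · calc y⁻¹ * x⁻¹ * (x * y) * (y⁻¹ * x⁻¹) = y⁻¹ * (x⁻¹ * x * (y * y⁻¹)) * x⁻¹ := by
          simp only [mul_assoc]
      _ = y⁻¹ * y * y⁻¹ * (x⁻¹ * x * x⁻¹) := by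
          rw [idem_comm _ _ idem_x idem_y]; simp only [mul_assoc]
      _ = y⁻¹ * x⁻¹ := by rw [inv_mul_inv, inv_mul_inv]

theorem mul_inv_eq_one_of_mul_eq_one {x y : M} (h : x * y = 1) : x * x⁻¹ = 1 :=
  calc x * x⁻¹ = x * x⁻¹ * (x * y) := by rw [h, mul_one]
    _ = x * y := by rw [← mul_assoc, mul_inv_mul]
    _ = 1 := h

protected theorem map_inv {N : Type*} [InverseMonoid N] (φ : M →* N) (x : M) :
    φ x⁻¹ = (φ x)⁻¹ :=
  (inv_eq_of_mul_mul (by rw [← map_mul, ← map_mul, mul_inv_mul])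
    (by rw [← map_mul, ← map_mul, inv_mul_inv])).symm

end InverseMonoid

section WordProd

variable {X M : Type*}

theorem wordProd_nil [Monoid M] [Inv M] (f : X → M) : wordProd f [] = 1 := rfl

theorem wordProd_cons [Monoid M] [Inv M] (f : X → M) (l : X × Bool) (w : List (X × Bool)) :
    wordProd f (l :: w) = (if l.2 then f l.1 else (f l.1)⁻¹) * wordProd f w := by
  simp [wordProd]

theorem wordProd_append [Monoid M] [Inv M] (f : X → M) (v w : List (X × Bool)) :
    wordProd f (v ++ w) = wordProd f v * wordProd f w := by
  simp [wordProd]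

theorem wordProd_flatten [Monoid M] [Inv M] (f : X → M) (L : List (List (X × Bool))) :
    wordProd f L.flatten = (L.map (wordProd f)).prod := by
  induction L with
  | nil => rfl
  | cons w L ih => rw [List.flatten_cons, wordProd_append, ih, List.map_cons, List.prod_cons]

theorem map_wordProd [Monoid M] [Inv M] {N : Type*} [Monoid N] [Inv N] (φ : M →* N)
    (hφ : ∀ m, φ m⁻¹ = (φ m)⁻¹) {f : X → M} {g : X → N} (hfg : ∀ x, φ (f x) = g x)
    (w : List (X × Bool)) : φ (wordProd f w) = wordProd g w := by
  induction w with
  | nil => exact map_one φ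
  | cons l w ih =>
    rw [wordProd_cons, wordProd_cons, map_mul, ih]
    obtain ⟨x, _ | _⟩ := l <;> simp [hφ, hfg]

theorem wordProd_winv [InverseMonoid M] (f : X → M) (w : List (X × Bool)) :
    wordProd f (winv w) = (wordProd f w)⁻¹ := by
  induction w with
  | nil => exact InverseMonoid.inv_one.symm
  | cons l w ih =>
    have hw : winv (l :: w) = winv w ++ [(l.1, !l.2)] := by simp [winv]
    rw [hw, wordProd_append, ih, wordProd_cons f l, InverseMonoid.mul_inv_rev]
    obtain ⟨x, _ | _⟩ := l <;> simp [wordProd, InverseMonoid.inv_inv]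

theorem FreeGroup.mk_eq_wordProd_of (w : List (X × Bool)) :
    FreeGroup.mk w = wordProd FreeGroup.of w := by
  induction w with
  | nil => rfl
  | cons l w ih =>
    rw [wordProd_cons, ← ih, ← List.singleton_append, ← FreeGroup.mul_mk]
    obtain ⟨x, _ | _⟩ := l <;> rfl

end WordProd

namespace PEquiv

variable {α β γ : Type*}

theorem trans_apply (f : α ≃. β) (g : β ≃. γ) (a : α) : f.trans g a = (f a).bind g := rfl

theorem self_trans_symm_trans_self (f : α ≃. β) : (f.trans f.symm).trans f = f := by
  refine PEquiv.ext fun a => ?_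
  rw [trans_apply, trans_apply]
  cases h : f a with
  | none => rfl
  | some c => simp [f.eq_some_iff.mpr h, h]

theorem apply_eq_some_self_or_none {e : α ≃. α} (he : e.trans e = e) (a : α) :
    e a = some a ∨ e a = none := by
  cases h : e a with
  | none => exact Or.inr rfl
  | some b =>
    have hb : e b = some b := by simpa [trans_apply, h] using congrArg (· a) he
    exact Or.inl (congrArg some (e.inj hb h))

instance instInverseMonoid : InverseMonoid (α ≃. α) where
  mul f g := f.trans g
  one := PEquiv.refl α
  mul_assoc := trans_assoc
  one_mul := refl_trans
  mul_one := trans_refl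
  inv := PEquiv.symm
  mul_inv_mul := self_trans_symm_trans_self
  inv_mul_inv f := self_trans_symm_trans_self f.symm
  idem_comm e f he hf := by
    refine PEquiv.ext fun a => ?_
    change (e a).bind f = (f a).bind e
    rcases apply_eq_some_self_or_none he a with h | h <;>
      rcases apply_eq_some_self_or_none hf a with h' | h' <;> simp [h, h']

theorem mul_def (f g : α ≃. α) : f * g = f.trans g := rfl

end PEquiv

section PartialRightMul

variable {S G X : Type*} [Group G] (ι : S ↪ G)

open Classical in
noncomputable def partialRightMul (g : G) (s : S) : Option S :=
  if h : ∃ t, ι t = ι s * g then some h.choose else none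

theorem mem_partialRightMul {g : G} {s t : S} :
    t ∈ partialRightMul ι g s ↔ ι t = ι s * g := by
  unfold partialRightMul
  split_ifs with h
  · rw [Option.mem_some_iff]
    exact ⟨fun ht => ht ▸ h.choose_spec, fun ht => ι.injective (h.choose_spec.trans ht.symm)⟩
  · exact ⟨fun ht => absurd ht (Option.not_mem_none t), fun ht => absurd ⟨t, ht⟩ h⟩

noncomputable def rightMulPEquiv (g : G) : S ≃. S where
  toFun := partialRightMul ι g
  invFun := partialRightMul ι g⁻¹
  inv s t := by
    rw [← Option.mem_def, ← Option.mem_def, mem_partialRightMul, mem_partialRightMul,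
      eq_mul_inv_iff_mul_eq, eq_comm]

theorem mem_rightMulPEquiv {g : G} {s t : S} :
    t ∈ rightMulPEquiv ι g s ↔ ι t = ι s * g :=
  mem_partialRightMul ι

theorem inv_rightMulPEquiv (g : G) : (rightMulPEquiv ι g)⁻¹ = rightMulPEquiv ι g⁻¹ :=
  PEquiv.ext fun _ => rfl

theorem signed_rightMulPEquiv (g : G) (b : Bool) :
    (if b then rightMulPEquiv ι g else (rightMulPEquiv ι g)⁻¹) =
      rightMulPEquiv ι (if b then g else g⁻¹) := by
  cases b
  · exact inv_rightMulPEquiv ι g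
  · rfl

theorem mem_wordProd_rightMulPEquiv (a : X → G) {w : List (X × Bool)} {s t : S}
    (h : t ∈ wordProd (fun x => rightMulPEquiv ι (a x)) w s) :
    ι t = ι s * wordProd a w := by
  induction w generalizing s with
  | nil => rw [Option.mem_some_iff.mp h]; exact (mul_one _).symm
  | cons l w ih =>
    rw [wordProd_cons, signed_rightMulPEquiv, PEquiv.mul_def, PEquiv.mem_trans] at h
    obtain ⟨m, hm, ht⟩ := h
    rw [ih ht, (mem_rightMulPEquiv ι).mp hm, wordProd_cons, mul_assoc]

theorem exists_mem_wordProd_rightMulPEquiv (a : X → G) {w : List (X × Bool)} {s : S}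
    (h : ∀ p, p <+: w → ι s * wordProd a p ∈ Set.range ι) :
    ∃ t, t ∈ wordProd (fun x => rightMulPEquiv ι (a x)) w s := by
  induction w generalizing s with
  | nil => exact ⟨s, rfl⟩
  | cons l w ih =>
    obtain ⟨m, hm⟩ := h [l] (List.prefix_cons_iff.mpr (Or.inr ⟨[], rfl, List.nil_prefix⟩))
    rw [wordProd_cons, wordProd_nil, mul_one] at hm
    obtain ⟨t, ht⟩ := ih fun p hp => by
      rw [hm, mul_assoc, ← wordProd_cons]
      exact h (l :: p) (List.prefix_cons_iff.mpr (Or.inr ⟨p, rfl, hp⟩))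
    refine ⟨t, ?_⟩
    rw [wordProd_cons, signed_rightMulPEquiv, PEquiv.mul_def, PEquiv.mem_trans]
    exact ⟨m, (mem_rightMulPEquiv ι).mpr hm, ht⟩

theorem wordProd_rightMulPEquiv_eq_one (a : X → G) {w : List (X × Bool)}
    (hw : wordProd a w = 1) (h : ∀ s p, p <+: w → ι s * wordProd a p ∈ Set.range ι) :
    wordProd (fun x => rightMulPEquiv ι (a x)) w = 1 := by
  refine PEquiv.ext fun s => ?_
  obtain ⟨t, ht⟩ := exists_mem_wordProd_rightMulPEquiv ι a (h s)
  have hts : t = s := ι.injective (by rw [mem_wordProd_rightMulPEquiv ι a ht, hw, mul_one])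
  rw [ht, hts]
  rfl

end PartialRightMul

theorem List.prefix_append_or {α : Type*} {p v w : List α} (h : p <+: v ++ w) :
    p <+: v ∨ ∃ p', p = v ++ p' ∧ p' <+: w := by
  obtain ⟨s, hs⟩ := h
  rcases List.append_eq_append_iff.mp hs with ⟨v', rfl, -⟩ | ⟨p', rfl, rfl⟩
  · exact Or.inl (List.prefix_append _ _)
  · exact Or.inr ⟨p', rfl, List.prefix_append _ _⟩

theorem FreeGroup.mk_mem_range_map {X C : Type*} (c : C → X) {w : List (X × Bool)}
    (hw : ∀ l ∈ w, l.1 ∈ Set.range c) : FreeGroup.mk w ∈ (FreeGroup.map c).range := by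
  induction w with
  | nil => exact one_mem _
  | cons l w ih =>
    obtain ⟨y, hy⟩ := hw l List.mem_cons_self
    rw [← List.singleton_append, ← FreeGroup.mul_mk]
    exact mul_mem ⟨FreeGroup.mk [(y, l.2)], by simp [FreeGroup.map.mk, hy]⟩
      (ih fun l' hl' => hw l' (List.mem_cons_of_mem _ hl'))

section PrefixMonoid

variable {X I : Type*} {rel : I → List (X × Bool)}

theorem toPres_mk_eq_wordProd (w : List (X × Bool)) :
    toPres (presRels rel) (FreeGroup.mk w) =
      wordProd (fun x => toPres (presRels rel) (FreeGroup.of x)) w := by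
  rw [FreeGroup.mk_eq_wordProd_of, map_wordProd _ (map_inv _) fun _ => rfl]

theorem toPres_mk_relator (i : I) : toPres (presRels rel) (FreeGroup.mk (rel i)) = 1 :=
  (QuotientGroup.eq_one_iff _).mpr (Subgroup.subset_normalClosure ⟨i, rfl⟩)

theorem small_prefixMonoid {C : Type} (c : C → X) (hc : ∀ i, ∀ l ∈ rel i, l.1 ∈ Set.range c) :
    Small.{0} (prefixMonoid rel) := by
  let π := (toPres (presRels rel)).comp (FreeGroup.map c)
  have hle : prefixMonoid rel ≤ π.range.toSubmonoid := by
    refine Submonoid.closure_le.mpr ?_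
    rintro _ ⟨i, p, hp, rfl⟩
    obtain ⟨y, hy⟩ := FreeGroup.mk_mem_range_map c fun l hl => hc i l (hp.subset hl)
    exact ⟨y, by simp [π, hy]⟩
  exact small_subset (s := Set.range π) hle

theorem mem_prefixMonoid_of_mul_inv_eq_one {M : Type*} [InverseMonoid M] {f : X → M}
    (hpres : IsSpecialPresentation rel f) [Small.{0} (prefixMonoid rel)]
    {w : List (X × Bool)} (hw : wordProd f w * (wordProd f w)⁻¹ = 1) :
    toPres (presRels rel) (FreeGroup.mk w) ∈ prefixMonoid rel := by
  set P := prefixMonoid rel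
  let ι : Shrink.{0} P ↪ PresentedGroup (presRels rel) :=
    (equivShrink P).symm.toEmbedding.trans (Function.Embedding.subtype _)
  have ι_mem (s : Shrink.{0} P) : ι s ∈ P := ((equivShrink P).symm s).2
  have mem_range_ι {g} (hg : g ∈ P) : g ∈ Set.range ι := ⟨equivShrink P ⟨g, hg⟩, by simp [ι]⟩
  obtain ⟨a, ha⟩ : ∃ a : X → PresentedGroup (presRels rel),
      ∀ w, wordProd a w = toPres (presRels rel) (FreeGroup.mk w) :=
    ⟨_, fun w => (toPres_mk_eq_wordProd w).symm⟩
  obtain ⟨φ, hφ⟩ := hpres.universal _ inferInstance (fun x => rightMulPEquiv ι (a x)) fun i =>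
    wordProd_rightMulPEquiv_eq_one ι a (by rw [ha, toPres_mk_relator]) fun s p hp =>
      mem_range_ι (by rw [ha]; exact mul_mem (ι_mem s) (Submonoid.subset_closure ⟨i, p, hp, rfl⟩))
  have hπ : wordProd (fun x => rightMulPEquiv ι (a x)) w *
      (wordProd (fun x => rightMulPEquiv ι (a x)) w)⁻¹ = 1 := by
    rw [← map_wordProd φ (InverseMonoid.map_inv φ) hφ, ← InverseMonoid.map_inv, ← map_mul, hw,
      map_one]
  let s₁ := equivShrink P ⟨1, one_mem P⟩
  obtain ⟨t, ht⟩ := Option.isSome_iff_exists.mp (PEquiv.trans_symm_eq_iff_forall_isSome.mp hπ s₁)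
  have hι : ι t = ι s₁ * wordProd a w := mem_wordProd_rightMulPEquiv ι a ht
  rw [show ι s₁ = 1 by simp [ι, s₁], one_mul, ha] at hι
  exact hι ▸ ι_mem t

end PrefixMonoid

section Factorisation

variable {X I : Type*} {k : ℕ} {u : Fin k → List (X × Bool)}

theorem exists_mem_of_mem_sfac {q : Fin k × Bool} {l : X × Bool} (hl : l ∈ sfac u q) :
    ∃ b, (l.1, b) ∈ u q.1 := by
  unfold sfac winv at hl
  split_ifs at hl
  · exact ⟨l.2, hl⟩
  · obtain ⟨l', hl', rfl⟩ := List.mem_map.mp (List.mem_reverse.mp hl)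
    exact ⟨l'.2, hl'⟩

theorem isUnit_wordProd_sfac {M : Type*} [InverseMonoid M] {f : X → M}
    (hunital : ∀ j : Fin k,
      wordProd f (u j) * (wordProd f (u j))⁻¹ = 1 ∧ (wordProd f (u j))⁻¹ * wordProd f (u j) = 1)
    (q : Fin k × Bool) : IsUnit (wordProd f (sfac u q)) := by
  unfold sfac
  split_ifs
  · exact ⟨⟨_, _, (hunital q.1).1, (hunital q.1).2⟩, rfl⟩
  · rw [wordProd_winv]
    exact ⟨⟨_, _, (hunital q.1).2, (hunital q.1).1⟩, rfl⟩

theorem wordProd_mul_inv_eq_one_of_isPrefix {M : Type*} [InverseMonoid M] {f : X → M}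
    {v w p : List (X × Bool)} (hvw : wordProd f (v ++ w) = 1) (hv : IsUnit (wordProd f v))
    (hp : p <+: w) : wordProd f p * (wordProd f p)⁻¹ = 1 := by
  obtain ⟨s, rfl⟩ := hp
  obtain ⟨v', hv'⟩ := hv
  rw [wordProd_append, wordProd_append, ← hv', Units.mul_eq_one_iff_inv_eq] at hvw
  refine InverseMonoid.mul_inv_eq_one_of_mul_eq_one (y := wordProd f s * v') ?_
  rw [← mul_assoc, ← hvw, Units.inv_mul]

theorem wordProd_mul_inv_eq_one_of_isPrefix_sfac {M : Type*} [InverseMonoid M] {f : X → M}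
    (hunital : ∀ j : Fin k,
      wordProd f (u j) * (wordProd f (u j))⁻¹ = 1 ∧ (wordProd f (u j))⁻¹ * wordProd f (u j) = 1)
    {L : List (Fin k × Bool)} (hL : wordProd f (L.map (sfac u)).flatten = 1)
    {q : Fin k × Bool} (hq : q ∈ L) {p : List (X × Bool)} (hp : p <+: sfac u q) :
    wordProd f p * (wordProd f p)⁻¹ = 1 := by
  obtain ⟨L₁, L₂, rfl⟩ := List.append_of_mem hq
  rw [List.map_append, List.flatten_append, List.map_cons, List.flatten_cons] at hL
  refine wordProd_mul_inv_eq_one_of_isPrefix hL ?_ (List.prefix_append_of_prefix hp)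
  rw [wordProd_flatten]
  refine List.prod_isUnit fun m hm => ?_
  obtain ⟨_, hw, rfl⟩ := List.mem_map.mp hm
  obtain ⟨q', -, rfl⟩ := List.mem_map.mp hw
  exact isUnit_wordProd_sfac hunital q'

variable {rel : I → List (X × Bool)} {seqs : I → List (Fin k × Bool)}

def factorPrefixMonoid (rel : I → List (X × Bool)) (u : Fin k → List (X × Bool))
    (seqs : I → List (Fin k × Bool)) : Submonoid (PresentedGroup (presRels rel)) :=
  Submonoid.closure
    {g : PresentedGroup (presRels rel) | ∃ (i : I), ∃ q ∈ seqs i,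
      ∃ p : List (X × Bool), p <+: sfac u q ∧ g = toPres (presRels rel) (FreeGroup.mk p)}

theorem small_prefixMonoid_of_factorisation
    (hfac : ∀ i, rel i = ((seqs i).map (sfac u)).flatten) : Small.{0} (prefixMonoid rel) := by
  refine small_prefixMonoid (fun c : Σ j : Fin k, Fin (u j).length => ((u c.1).get c.2).1)
    fun i l hl => ?_
  rw [hfac i, List.mem_flatten] at hl
  obtain ⟨_, hw, hl⟩ := hl
  obtain ⟨q, -, rfl⟩ := List.mem_map.mp hw
  obtain ⟨b, hb⟩ := exists_mem_of_mem_sfac hl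
  obtain ⟨n, hn⟩ := List.mem_iff_get.mp hb
  exact ⟨⟨q.1, n⟩, congrArg (·.1) hn⟩

theorem factorPrefixMonoid_le_prefixMonoid {M : Type*} [InverseMonoid M] {f : X → M}
    (hpres : IsSpecialPresentation rel f) (hfac : ∀ i, rel i = ((seqs i).map (sfac u)).flatten)
    (hright : ∀ i, ∀ q ∈ seqs i, ∀ p : List (X × Bool),
      p <+: sfac u q → wordProd f p * (wordProd f p)⁻¹ = 1) :
    factorPrefixMonoid rel u seqs ≤ prefixMonoid rel := by
  have := small_prefixMonoid_of_factorisation hfac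
  refine Submonoid.closure_le.mpr ?_
  rintro _ ⟨i, q, hq, p, hp, rfl⟩
  exact mem_prefixMonoid_of_mul_inv_eq_one hpres (hright i q hq p hp)

theorem toPres_mk_mem_factorPrefixMonoid {i : I} {L : List (Fin k × Bool)}
    (hL : ∀ q ∈ L, q ∈ seqs i) {p : List (X × Bool)} (hp : p <+: (L.map (sfac u)).flatten) :
    toPres (presRels rel) (FreeGroup.mk p) ∈ factorPrefixMonoid rel u seqs := by
  induction L generalizing p with
  | nil =>
    rw [List.prefix_nil.mp hp, ← FreeGroup.one_eq_mk, map_one]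
    exact one_mem _
  | cons q L ih =>
    have hq := hL q List.mem_cons_self
    rw [List.map_cons, List.flatten_cons] at hp
    rcases List.prefix_append_or hp with hp | ⟨p', rfl, hp'⟩
    · exact Submonoid.subset_closure ⟨i, q, hq, p, hp, rfl⟩
    · rw [← FreeGroup.mul_mk, map_mul]
      exact mul_mem (Submonoid.subset_closure ⟨i, q, hq, _, List.prefix_refl _, rfl⟩)
        (ih (fun q' hq' => hL q' (List.mem_cons_of_mem _ hq')) hp')

theorem prefixMonoid_le_factorPrefixMonoid
    (hfac : ∀ i, rel i = ((seqs i).map (sfac u)).flatten) :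
    prefixMonoid rel ≤ factorPrefixMonoid rel u seqs := by
  refine Submonoid.closure_le.mpr ?_
  rintro _ ⟨i, p, hp, rfl⟩
  exact toPres_mk_mem_factorPrefixMonoid (fun _ => id) (hfac i ▸ hp)

end Factorisation

/-- Let `M = Inv⟨X | r_i(u_1,…,u_k) = 1⟩` be a special inverse monoid whose
relators factorise over words `u_1, …, u_k` each representing a unit of `M` (a unital
factorisation).  Then every prefix of every occurring signed factor represents a right
unit of `M`, and the factorisation is conservative in the maximal group image `G`: the
submonoid of `G` generated by the prefixes of the occurring factors equals the prefix
monoid of `G`. -/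
theorem stmt13 {X I M : Type*} [InverseMonoid M] {k : ℕ}
    (rel : I → List (X × Bool)) (f : X → M)
    (hpres : IsSpecialPresentation rel f)
    (u : Fin k → List (X × Bool)) (seqs : I → List (Fin k × Bool))
    (hfac : ∀ i, rel i = ((seqs i).map (sfac u)).flatten)
    (hunital : ∀ j : Fin k,
      wordProd f (u j) * (wordProd f (u j))⁻¹ = 1 ∧
      (wordProd f (u j))⁻¹ * wordProd f (u j) = 1) :
    (∀ (i : I), ∀ q ∈ seqs i, ∀ p : List (X × Bool),
        p <+: sfac u q → wordProd f p * (wordProd f p)⁻¹ = 1) ∧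
    Submonoid.closure
        {g : PresentedGroup (presRels rel) | ∃ (i : I), ∃ q ∈ seqs i,
          ∃ p : List (X × Bool), p <+: sfac u q ∧ g = toPres (presRels rel) (FreeGroup.mk p)} =
      prefixMonoid rel := by
  have hright : ∀ (i : I), ∀ q ∈ seqs i, ∀ p : List (X × Bool),
      p <+: sfac u q → wordProd f p * (wordProd f p)⁻¹ = 1 := fun i _ hq _ hp =>
    wordProd_mul_inv_eq_one_of_isPrefix_sfac hunital (hfac i ▸ hpres.relator_one i) hq hp
  exact ⟨hright, le_antisymm (factorPrefixMonoid_le_prefixMonoid hpres hfac hright)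
    (prefixMonoid_le_factorPrefixMonoid hfac)⟩
end
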